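/- For the 1-D quantization energy F(x_1,…,x_N) = Σ_i ∫_{V_i} (x_i − y)² dy on [0,1] with ordered generators and Voronoi cells V_i determined by midpoints, the uniform configuration x_i = (2i−1)/(2N) yields F = 1/(12N²), and this value is the minimum of F over all generator configurations. -/

import Mathlib

/-!
On its Voronoi cell `[a, b] ∋ c` a generator contributes `((c - a)³ + (b - c)³) / 3`, which by
convexity of `t ↦ t³` is at least `(b - a)³ / 12`, with equality at the midpoint. The cell lengths
are nonnegative and sum to `1`, so by the power-mean inequality `Σ Lᵢ³ ≥ 1 / N²`, with equality for
equal lengths; the uniform configuration attains both equalities.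
-/

open MeasureTheory Finset

/-- Voronoi cell endpoints (midpoints) for generators `x 0, …, x (N-1)` on
`[0,1]`: `m 0 = 0`, `m N = 1`, `m i = (x (i-1) + x i)/2` for `0 < i < N`. -/
noncomputable def voronoiMid (N : ℕ) (x : ℕ → ℝ) (i : ℕ) : ℝ :=
  if i = 0 then 0 else if i = N then 1 else (x (i - 1) + x i) / 2

noncomputable def quantizationEnergy (N : ℕ) (x : ℕ → ℝ) : ℝ :=
  ∑ i ∈ Finset.range N,
    ∫ y in Set.Icc (voronoiMid N x i) (voronoiMid N x (i + 1)), (x i - y) ^ 2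

theorem integral_Icc_sub_sq {a b : ℝ} (c : ℝ) (hab : a ≤ b) :
    ∫ y in Set.Icc a b, (c - y) ^ 2 = ((c - a) ^ 3 + (b - c) ^ 3) / 3 := by
  rw [integral_Icc_eq_integral_Ioc, ← intervalIntegral.integral_of_le hab,
    intervalIntegral.integral_comp_sub_left (fun y => y ^ 2), integral_pow]
  ring

theorem div_twelve_le_integral_Icc_sub_sq {a b c : ℝ} (hac : a ≤ c) (hcb : c ≤ b) :
    (b - a) ^ 3 / 12 ≤ ∫ y in Set.Icc a b, (c - y) ^ 2 := by
  rw [integral_Icc_sub_sq c (hac.trans hcb)]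
  nlinarith [mul_nonneg (mul_nonneg (sub_nonneg.2 hac) (sub_nonneg.2 hcb)) (sq_nonneg (a + b - 2 * c)),
    pow_nonneg (sub_nonneg.2 hac) 3, pow_nonneg (sub_nonneg.2 hcb) 3]

section Voronoi

variable {N : ℕ} {x : ℕ → ℝ}

theorem sum_range_voronoiMid_sub (hN : 0 < N) (x : ℕ → ℝ) :
    ∑ i ∈ range N, (voronoiMid N x (i + 1) - voronoiMid N x i) = 1 := by
  rw [sum_range_sub]
  simp [voronoiMid, hN.ne']

variable (hmono : ∀ i j, i < j → j < N → x i < x j)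
include hmono

theorem voronoiMid_le_self (h0 : 0 ≤ x 0) {i : ℕ} (hi : i < N) : voronoiMid N x i ≤ x i := by
  rcases Nat.eq_zero_or_pos i with rfl | hpos
  · simpa [voronoiMid] using h0
  · have := hmono (i - 1) i (by omega) hi
    simp only [voronoiMid, hpos.ne', hi.ne, if_false]
    linarith

theorem self_le_voronoiMid_succ (h1 : x (N - 1) ≤ 1) {i : ℕ} (hi : i < N) :
    x i ≤ voronoiMid N x (i + 1) := by
  rcases (Nat.succ_le_of_lt hi).eq_or_lt with hlast | hlt
  · simpa [voronoiMid, ← hlast] using h1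
  · have := hmono i (i + 1) i.lt_succ_self hlt
    simp only [voronoiMid, Nat.succ_ne_zero, hlt.ne, if_false, Nat.add_sub_cancel]
    linarith

theorem one_div_twelve_mul_sq_le_quantizationEnergy (hN : 0 < N) (h0 : 0 ≤ x 0)
    (h1 : x (N - 1) ≤ 1) : 1 / (12 * (N : ℝ) ^ 2) ≤ quantizationEnergy N x := by
  set L : ℕ → ℝ := fun i => voronoiMid N x (i + 1) - voronoiMid N x i
  have hL : ∀ i ∈ range N, 0 ≤ L i := fun i hi =>
    sub_nonneg.2 ((voronoiMid_le_self hmono h0 (mem_range.1 hi)).trans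
      (self_le_voronoiMid_succ hmono h1 (mem_range.1 hi)))
  have power_mean : 1 / (N : ℝ) ^ 2 ≤ ∑ i ∈ range N, L i ^ 3 := by
    simpa [L, sum_range_voronoiMid_sub hN x] using pow_sum_div_card_le_sum_pow hL 2
  calc 1 / (12 * (N : ℝ) ^ 2) = (1 / (N : ℝ) ^ 2) / 12 := by ring
    _ ≤ ∑ i ∈ range N, L i ^ 3 / 12 := by rw [← sum_div]; gcongr
    _ ≤ quantizationEnergy N x := sum_le_sum fun i hi =>
        div_twelve_le_integral_Icc_sub_sq (voronoiMid_le_self hmono h0 (mem_range.1 hi))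
          (self_le_voronoiMid_succ hmono h1 (mem_range.1 hi))

end Voronoi

theorem voronoiMid_uniform {N i : ℕ} (hN : 0 < N) (hi : i ≤ N) :
    voronoiMid N (fun i => (2 * (i : ℝ) + 1) / (2 * N)) i = i / N := by
  have hN' : (N : ℝ) ≠ 0 := Nat.cast_ne_zero.2 hN.ne'
  rcases Nat.eq_zero_or_pos i with rfl | hpos
  · simp [voronoiMid]
  rcases hi.eq_or_lt with rfl | hlt
  · simp [voronoiMid, hpos.ne', hN']
  · simp only [voronoiMid, hpos.ne', hlt.ne, if_false, Nat.cast_sub hpos, Nat.cast_one]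
    field_simp
    ring

theorem quantizationEnergy_uniform {N : ℕ} (hN : 0 < N) :
    quantizationEnergy N (fun i => (2 * (i : ℝ) + 1) / (2 * N)) = 1 / (12 * N ^ 2) := by
  have hN' : (N : ℝ) ≠ 0 := Nat.cast_ne_zero.2 hN.ne'
  have cell : ∀ i ∈ range N,
      ∫ y in Set.Icc (voronoiMid N (fun i => (2 * (i : ℝ) + 1) / (2 * N)) i)
        (voronoiMid N (fun i => (2 * (i : ℝ) + 1) / (2 * N)) (i + 1)),
        ((2 * (i : ℝ) + 1) / (2 * N) - y) ^ 2 = 1 / (12 * (N : ℝ) ^ 3) := by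
    intro i hi
    have hi := mem_range.1 hi
    rw [voronoiMid_uniform hN hi.le, voronoiMid_uniform hN hi,
      integral_Icc_sub_sq _ (by gcongr; simp)]
    field_simp
    push_cast
    ring
  rw [quantizationEnergy, sum_congr rfl cell, sum_const, card_range, nsmul_eq_mul]
  field_simp

/-- the uniform configuration `x_i = (2i+1)/(2N)` gives
`F = 1/(12N²)`, which is the minimum over all ordered configurations. -/
theorem uniform_configuration_minimizes_quantization_energy
    (N : ℕ) (hN : 0 < N) :
    quantizationEnergy N (fun i => (2 * (i : ℝ) + 1) / (2 * N)) = 1 / (12 * N ^ 2) ∧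
    ∀ x : ℕ → ℝ, 0 ≤ x 0 → (∀ i j, i < j → j < N → x i < x j) → x (N - 1) ≤ 1 →
      quantizationEnergy N (fun i => (2 * (i : ℝ) + 1) / (2 * N))
        ≤ quantizationEnergy N x := by
  refine ⟨quantizationEnergy_uniform hN, fun x h0 hmono h1 => ?_⟩
  rw [quantizationEnergy_uniform hN]
  exact one_div_twelve_mul_sq_le_quantizationEnergy hmono hN h0 h1
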